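/- Let X⋆ ∈ ℝ^{I₁×I₂×I₃} have tubal rank R with skinny t-SVD X⋆ = U⋆*Σ⋆*V⋆ᵀ, let 0 < ε < 1 and 0 < τ ≤ 1, and suppose Q_k is an optimal alignment tensor between (L_k,R_k) and (L⋆,R⋆) with dist(L_k,R_k;L⋆,R⋆) ≤ (ε/√I₃)·τ^k·σ_min(X⋆). Then, writing L♮ := L_k*Q_k and R♮ := R_k*Q_k^{−ᵀ}: ‖L♮*(L♮ᵀ*L♮)⁻¹*Σ⋆^{1/2}‖₂ ∨ ‖R♮*(R♮ᵀ*R♮)⁻¹*Σ⋆^{1/2}‖₂ ≤ 1/(1 − ε). -/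

import Mathlib

open scoped BigOperators
open Matrix

/-- An order-3 real tensor. -/
abbrev Tensor (I₁ I₂ I₃ : ℕ) := Fin I₁ → Fin I₂ → Fin I₃ → ℝ

namespace RTPCA

variable {I₁ I₂ I₃ J R : ℕ}

/-- The t-product, computed by circular convolution along the third mode
(equivalently, slice-wise products in the Fourier domain). -/
noncomputable def tprod (A : Tensor I₁ I₂ I₃) (B : Tensor I₂ J I₃) : Tensor I₁ J I₃ :=
  fun i j k => ∑ l : Fin I₂, ∑ t : Fin I₃, A i l t * B l j (k - t)

/-- The tensor transpose: transpose each frontal slice and reverse the order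
of the frontal slices 2 through I₃. -/
def tT (A : Tensor I₁ I₂ I₃) : Tensor I₂ I₁ I₃ :=
  fun j i k => A i j (-k)

/-- The identity tensor: first frontal slice is the identity, the rest are zero. -/
def idT (R I₃ : ℕ) : Tensor R R I₃ :=
  fun i j k => if i = j ∧ (k : ℕ) = 0 then 1 else 0

/-- Discrete Fourier transform along the third mode. -/
noncomputable def dft (A : Tensor I₁ I₂ I₃) (i : Fin I₁) (j : Fin I₂) (k : Fin I₃) : ℂ :=
  ∑ t : Fin I₃, (A i j t : ℂ) *
    Complex.exp (-(2 * Real.pi * Complex.I * (k.val : ℂ) * (t.val : ℂ)) / (I₃ : ℂ))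

/-- Fourier-domain frontal slice. -/
noncomputable def fSlice (A : Tensor I₁ I₂ I₃) (k : Fin I₃) : Matrix (Fin I₁) (Fin I₂) ℂ :=
  Matrix.of fun i j => dft A i j k

/-- Inverse DFT along the third mode (real part). -/
noncomputable def invDft (F : Fin I₁ → Fin I₂ → Fin I₃ → ℂ) : Tensor I₁ I₂ I₃ :=
  fun i j t =>
    ((∑ k : Fin I₃, F i j k *
      Complex.exp ((2 * Real.pi * Complex.I * (k.val : ℂ) * (t.val : ℂ)) / (I₃ : ℂ))) / (I₃ : ℂ)).re

/-- Squared Frobenius norm. -/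
noncomputable def fro2 (A : Tensor I₁ I₂ I₃) : ℝ := ∑ i, ∑ j, ∑ k, (A i j k) ^ 2

/-- Frobenius norm. -/
noncomputable def froNorm (A : Tensor I₁ I₂ I₃) : ℝ := Real.sqrt (fro2 A)

/-- Entrywise sup norm ‖A‖_∞. -/
noncomputable def infNorm (A : Tensor I₁ I₂ I₃) : ℝ := ⨆ i, ⨆ j, ⨆ k, |A i j k|

/-- ℓ_{2,∞} norm: largest ℓ₂ norm of a horizontal slice. -/
noncomputable def twoInfNorm (A : Tensor I₁ I₂ I₃) : ℝ :=
  ⨆ i, Real.sqrt (∑ j, ∑ k, (A i j k) ^ 2)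

/-- ℓ_{1,∞} norm: largest ℓ₁ norm of a horizontal slice. -/
noncomputable def oneInfNorm (A : Tensor I₁ I₂ I₃) : ℝ := ⨆ i, ∑ j, ∑ k, |A i j k|

/-- Spectral norm (largest singular value) of a complex matrix. -/
noncomputable def matSpecNorm {m n : ℕ} (M : Matrix (Fin m) (Fin n) ℂ) : ℝ :=
  ‖LinearMap.toContinuousLinearMap (Matrix.toEuclideanLin M)‖

/-- Tensor spectral norm = tensor operator norm: the largest singular value of
the Fourier-domain frontal slices. -/
noncomputable def specNorm (A : Tensor I₁ I₂ I₃) : ℝ :=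
  ⨆ k : Fin I₃, matSpecNorm (fSlice A k)

/-- f-diagonal in the Fourier domain with strictly positive diagonal entries. -/
def FDiagPos (S : Tensor R R I₃) : Prop :=
  (∀ k, ∀ i j : Fin R, i ≠ j → fSlice S k i j = 0) ∧
  (∀ k, ∀ i : Fin R, 0 < (fSlice S k i i).re ∧ (fSlice S k i i).im = 0)

/-- f-diagonal in the Fourier domain with nonnegative diagonal entries. -/
def FDiagNonneg (S : Tensor R R I₃) : Prop :=
  (∀ k, ∀ i j : Fin R, i ≠ j → fSlice S k i j = 0) ∧
  (∀ k, ∀ i : Fin R, 0 ≤ (fSlice S k i i).re ∧ (fSlice S k i i).im = 0)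

/-- Skinny t-SVD with tubal rank R (strictly positive Fourier-domain diagonal). -/
structure IsSkinnyTSVD (X : Tensor I₁ I₂ I₃) (U : Tensor I₁ R I₃)
    (S : Tensor R R I₃) (V : Tensor I₂ R I₃) : Prop where
  decomp : X = tprod (tprod U S) (tT V)
  orthU : tprod (tT U) U = idT R I₃
  orthV : tprod (tT V) V = idT R I₃
  diag : FDiagPos S

/-- Skinny t-SVD with tubal rank at most R (nonnegative diagonal allowed). -/
structure IsSkinnyTSVDLe (X : Tensor I₁ I₂ I₃) (U : Tensor I₁ R I₃)
    (S : Tensor R R I₃) (V : Tensor I₂ R I₃) : Prop where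
  decomp : X = tprod (tprod U S) (tT V)
  orthU : tprod (tT U) U = idT R I₃
  orthV : tprod (tT V) V = idT R I₃
  diag : FDiagNonneg S

/-- σ_min: the smallest Fourier-domain diagonal entry of Σ. -/
noncomputable def sigmaMin (S : Tensor R R I₃) : ℝ :=
  ⨅ k : Fin I₃, ⨅ i : Fin R, (fSlice S k i i).re

/-- σ_max (= σ₁): the largest Fourier-domain diagonal entry of Σ. -/
noncomputable def sigmaMax (S : Tensor R R I₃) : ℝ :=
  ⨆ k : Fin I₃, ⨆ i : Fin R, (fSlice S k i i).re

/-- Condition number κ = σ_max / σ_min. -/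
noncomputable def condNum (S : Tensor R R I₃) : ℝ := sigmaMax S / sigmaMin S

/-- Σ^{1/2}: entrywise square roots in the Fourier domain. -/
noncomputable def sqrtT (S : Tensor R R I₃) : Tensor R R I₃ :=
  invDft fun i j k => (Real.sqrt ((dft S i j k).re) : ℂ)

/-- Σ^{-1/2}: entrywise reciprocal square roots in the Fourier domain. -/
noncomputable def invSqrtT (S : Tensor R R I₃) : Tensor R R I₃ :=
  invDft fun i j k => (((Real.sqrt ((dft S i j k).re))⁻¹ : ℝ) : ℂ)

/-- `Qi` is a two-sided t-product inverse of `Q` (i.e. `Q ∈ GL(R)`). -/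
def TInv (Q Qi : Tensor R R I₃) : Prop :=
  tprod Q Qi = idT R I₃ ∧ tprod Qi Q = idT R I₃

/-- Alignment error (the quantity inside the infimum defining `distT`)
for a given invertible Q with inverse Qi. -/
noncomputable def alignErr (L Ls : Tensor I₁ R I₃) (Rt Rs : Tensor I₂ R I₃)
    (Sh : Tensor R R I₃) (Q Qi : Tensor R R I₃) : ℝ :=
  Real.sqrt ((froNorm (tprod (tprod L Q - Ls) Sh)) ^ 2 +
    (froNorm (tprod (tprod Rt (tT Qi) - Rs) Sh)) ^ 2)

/-- The distance metric dist(L,R;L⋆,R⋆): the infimum of alignment errors over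
invertible tensors Q, where `Sh` is Σ⋆^{1/2}. -/
noncomputable def distT (L Ls : Tensor I₁ R I₃) (Rt Rs : Tensor I₂ R I₃)
    (Sh : Tensor R R I₃) : ℝ :=
  sInf {d : ℝ | ∃ Q Qi : Tensor R R I₃, TInv Q Qi ∧ d = alignErr L Ls Rt Rs Sh Q Qi}

/-- Q (with inverse Qi) is an optimal alignment tensor: it attains the infimum
defining the distance metric. -/
def IsOptAlign (L Ls : Tensor I₁ R I₃) (Rt Rs : Tensor I₂ R I₃)
    (Sh : Tensor R R I₃) (Q Qi : Tensor R R I₃) : Prop :=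
  TInv Q Qi ∧ alignErr L Ls Rt Rs Sh Q Qi = distT L Ls Rt Rs Sh

/-- Entrywise soft-thresholding. -/
noncomputable def softThresh (ζ : ℝ) (A : Tensor I₁ I₂ I₃) : Tensor I₁ I₂ I₃ :=
  fun i j k => Real.sign (A i j k) * max 0 (|A i j k| - ζ)

/-- Support: the set of index triples at which the tensor is nonzero. -/
def supp (A : Tensor I₁ I₂ I₃) : Set (Fin I₁ × Fin I₂ × Fin I₃) :=
  {p | A p.1 p.2.1 p.2.2 ≠ 0}

/-- α-sparsity: every horizontal, lateral and frontal slice has at most an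
α fraction of nonzero entries. -/
def IsSparse (α : ℝ) (S : Tensor I₁ I₂ I₃) : Prop :=
  (∀ i₁ : Fin I₁, ({p : Fin I₂ × Fin I₃ | S i₁ p.1 p.2 ≠ 0}.ncard : ℝ) ≤ α * I₂ * I₃) ∧
  (∀ i₂ : Fin I₂, ({p : Fin I₁ × Fin I₃ | S p.1 i₂ p.2 ≠ 0}.ncard : ℝ) ≤ α * I₁ * I₃) ∧
  (∀ i₃ : Fin I₃, ({p : Fin I₁ × Fin I₂ | S p.1 p.2 i₃ ≠ 0}.ncard : ℝ) ≤ α * I₁ * I₂)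

/-- Tensor μ-incoherence conditions for the skinny t-SVD factors U, V. -/
def Incoherent (μ : ℝ) (U : Tensor I₁ R I₃) (V : Tensor I₂ R I₃) : Prop :=
  twoInfNorm U ≤ Real.sqrt (μ * R / I₁) ∧ twoInfNorm V ≤ Real.sqrt (μ * R / I₂)

/-- Top-R truncated t-SVD of A: a skinny t-SVD-shaped factorization which, in
every Fourier-domain frontal slice, keeps R largest singular values together
with their singular vectors (the residual is orthogonal to the kept singular
vectors and its spectral norm is at most every kept singular value). -/
structure IsTruncTSVD (A : Tensor I₁ I₂ I₃) (U : Tensor I₁ R I₃)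
    (S : Tensor R R I₃) (V : Tensor I₂ R I₃) : Prop where
  orthU : tprod (tT U) U = idT R I₃
  orthV : tprod (tT V) V = idT R I₃
  diag : FDiagNonneg S
  leftOrth : ∀ k, (fSlice U k)ᴴ * (fSlice A k - fSlice (tprod (tprod U S) (tT V)) k) = 0
  rightOrth : ∀ k, (fSlice A k - fSlice (tprod (tprod U S) (tT V)) k) * fSlice V k = 0
  topR : ∀ k, ∀ r : Fin R,
    matSpecNorm (fSlice A k - fSlice (tprod (tprod U S) (tT V)) k) ≤ (fSlice S k r r).re

end RTPCA

open RTPCA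


/-!
Work one Fourier slice at a time, where the t-product becomes the matrix product. There
`L̂ = Û D + E` with `D = diag(√σ)`, `ÛᴴÛ = 1` and, bounding the operator norm by the Frobenius
norm of the slice, `‖E D‖ ≤ √I₃ ‖(L - L⋆) * Σ⋆^{1/2}‖_F ≤ ε σ_min`. As `σ_min ≤ D²`, this gives
`‖E w‖ ≤ ε ‖D w‖`, hence `‖L̂ w‖ ≥ (1 - ε) ‖D w‖`. For `w = (L̂ᴴ L̂)⁻¹ D x` moreover
`‖L̂ w‖² = ⟪D w, x⟫ ≤ ‖D w‖ ‖x‖`, and the two bounds give `‖L̂ w‖ ≤ ‖x‖ / (1 - ε)`.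
-/

open scoped Matrix.Norms.L2Operator ComplexConjugate

namespace Matrix

variable {𝕜 m n : Type*} [RCLike 𝕜] [Fintype m] [Fintype n] [DecidableEq n]

theorem l2_opNorm_le_sqrt_sum_norm_sq (M : Matrix m n 𝕜) :
    ‖M‖ ≤ √(∑ i, ∑ j, ‖M i j‖ ^ 2) := by
  rw [l2_opNorm_def]
  refine ContinuousLinearMap.opNorm_le_bound _ (Real.sqrt_nonneg _) fun x => ?_
  simp only [LinearEquiv.trans_apply, LinearMap.coe_toContinuousLinearMap', toLpLin_apply,
    EuclideanSpace.norm_eq]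
  rw [← Real.sqrt_mul (by positivity), Finset.sum_mul]
  refine Real.sqrt_le_sqrt (Finset.sum_le_sum fun i _ => ?_)
  calc ‖(M *ᵥ x.ofLp) i‖ ^ 2 ≤ (∑ j, ‖M i j‖ * ‖x.ofLp j‖) ^ 2 := by
        gcongr
        exact (norm_sum_le _ _).trans_eq (by simp only [norm_mul])
    _ ≤ (∑ j, ‖M i j‖ ^ 2) * ∑ j, ‖x.ofLp j‖ ^ 2 := Finset.sum_mul_sq_le_sq_mul_sq _ _ _

theorem norm_toEuclideanLin_le (M : Matrix m n 𝕜) (x : EuclideanSpace 𝕜 n) :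
    ‖toEuclideanLin M x‖ ≤ ‖M‖ * ‖x‖ :=
  M.l2_opNorm_mulVec x

theorem norm_toEuclideanLin_of_conjTranspose_mul_self_eq_one [DecidableEq m] {U : Matrix m n 𝕜}
    (hU : Uᴴ * U = 1) (v : EuclideanSpace 𝕜 n) : ‖toEuclideanLin U v‖ = ‖v‖ := by
  have h : inner 𝕜 (toEuclideanLin U v) (toEuclideanLin U v) = inner 𝕜 v v := by
    rw [← LinearMap.adjoint_inner_right, ← toEuclideanLin_conjTranspose_eq_adjoint,
      ← LinearMap.comp_apply, ← toLpLin_mul_same, hU, toLpLin_one, LinearMap.id_apply]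
  rw [inner_self_eq_norm_sq_to_K, inner_self_eq_norm_sq_to_K] at h
  exact (pow_left_inj₀ (norm_nonneg _) (norm_nonneg _) two_ne_zero).1 (by exact_mod_cast h)

theorem mul_norm_toEuclideanLin_diagonal_inv_le {d : n → ℝ} {s : ℝ} (hd : ∀ i, 0 < d i)
    (hds : ∀ i, s ≤ d i ^ 2) (w : EuclideanSpace 𝕜 n) :
    s * ‖toEuclideanLin (diagonal fun i => ((d i)⁻¹ : 𝕜)) w‖
      ≤ ‖toEuclideanLin (diagonal fun i => (d i : 𝕜)) w‖ := by
  rcases le_or_gt s 0 with hs | hs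
  · exact (mul_nonpos_of_nonpos_of_nonneg hs (norm_nonneg _)).trans (norm_nonneg _)
  rw [← abs_of_pos hs, ← Real.sqrt_sq_eq_abs, EuclideanSpace.norm_eq, EuclideanSpace.norm_eq,
    ← Real.sqrt_mul (sq_nonneg _), Finset.mul_sum]
  refine Real.sqrt_le_sqrt (Finset.sum_le_sum fun i _ => ?_)
  have hdi := hd i
  simp only [toLpLin_apply, mulVec_diagonal, norm_mul, norm_inv, RCLike.norm_ofReal,
    abs_of_pos hdi]
  rw [mul_pow, mul_pow, ← mul_assoc, inv_pow]
  gcongr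
  rw [← div_eq_mul_inv, div_le_iff₀ (by positivity)]
  nlinarith [hds i]

theorem one_sub_mul_norm_toEuclideanLin_diagonal_le [DecidableEq m] {A U : Matrix m n 𝕜}
    {d : n → ℝ} {s ε : ℝ} (hU : Uᴴ * U = 1) (hd : ∀ i, 0 < d i) (hds : ∀ i, s ≤ d i ^ 2)
    (hε : 0 ≤ ε)
    (hE : ‖(A - U * diagonal (fun i => (d i : 𝕜))) * diagonal (fun i => (d i : 𝕜))‖ ≤ ε * s)
    (w : EuclideanSpace 𝕜 n) :
    (1 - ε) * ‖toEuclideanLin (diagonal fun i => (d i : 𝕜)) w‖ ≤ ‖toEuclideanLin A w‖ := by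
  set D : Matrix n n 𝕜 := diagonal fun i => (d i : 𝕜)
  set Di : Matrix n n 𝕜 := diagonal fun i => ((d i)⁻¹ : 𝕜)
  have hDDi : D * Di = 1 := by
    rw [diagonal_mul_diagonal, ← diagonal_one]
    exact congrArg diagonal (funext fun i => mul_inv_cancel₀ (by exact_mod_cast (hd i).ne'))
  have hEw : ‖toEuclideanLin (A - U * D) w‖ ≤ ε * ‖toEuclideanLin D w‖ :=
    calc ‖toEuclideanLin (A - U * D) w‖
        = ‖toEuclideanLin ((A - U * D) * D) (toEuclideanLin Di w)‖ := by
          rw [← LinearMap.comp_apply, ← toLpLin_mul_same, Matrix.mul_assoc, hDDi, Matrix.mul_one]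
      _ ≤ ε * s * ‖toEuclideanLin Di w‖ := by grw [norm_toEuclideanLin_le, hE]
      _ ≤ ε * ‖toEuclideanLin D w‖ := by
          rw [mul_assoc]
          exact mul_le_mul_of_nonneg_left (mul_norm_toEuclideanLin_diagonal_inv_le hd hds w) hε
  have hUD : ‖toEuclideanLin (U * D) w‖ = ‖toEuclideanLin D w‖ := by
    rw [toLpLin_mul_same, LinearMap.comp_apply,
      norm_toEuclideanLin_of_conjTranspose_mul_self_eq_one hU]
  have hsplit : toEuclideanLin (U * D) w = toEuclideanLin A w - toEuclideanLin (A - U * D) w := by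
    simp
  have htri := norm_sub_le (toEuclideanLin A w) (toEuclideanLin (A - U * D) w)
  rw [← hsplit, hUD] at htri
  linarith

theorem norm_toEuclideanLin_sq_le_of_gram_mul_eq_one [DecidableEq m] {A : Matrix m n 𝕜}
    {G D : Matrix n n 𝕜} (hG : Aᴴ * A * G = 1) (hD : D.IsHermitian) (x : EuclideanSpace 𝕜 n) :
    ‖toEuclideanLin A (toEuclideanLin (G * D) x)‖ ^ 2
      ≤ ‖toEuclideanLin D (toEuclideanLin (G * D) x)‖ * ‖x‖ := by
  set w := toEuclideanLin (G * D) x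
  have hgram : toEuclideanLin (Aᴴ * A) w = toEuclideanLin D x := by
    rw [← LinearMap.comp_apply, ← toLpLin_mul_same, ← Matrix.mul_assoc, hG, Matrix.one_mul]
  have hinner : inner 𝕜 (toEuclideanLin A w) (toEuclideanLin A w)
      = inner 𝕜 (toEuclideanLin D w) x := by
    rw [← LinearMap.adjoint_inner_right, ← toEuclideanLin_conjTranspose_eq_adjoint,
      ← LinearMap.comp_apply, ← toLpLin_mul_same, hgram, ← LinearMap.adjoint_inner_left,
      ← toEuclideanLin_conjTranspose_eq_adjoint, hD.eq]
  calc ‖toEuclideanLin A w‖ ^ 2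
      = RCLike.re (inner 𝕜 (toEuclideanLin A w) (toEuclideanLin A w)) :=
        norm_sq_eq_re_inner _
    _ ≤ ‖toEuclideanLin D w‖ * ‖x‖ := hinner ▸ re_inner_le_norm _ _

theorem l2_opNorm_mul_mul_diagonal_le [DecidableEq m] {A U : Matrix m n 𝕜}
    {G : Matrix n n 𝕜} {d : n → ℝ} {s ε : ℝ} (hU : Uᴴ * U = 1) (hd : ∀ i, 0 < d i)
    (hds : ∀ i, s ≤ d i ^ 2) (hε₀ : 0 ≤ ε) (hε₁ : ε < 1) (hG : Aᴴ * A * G = 1)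
    (hE : ‖(A - U * diagonal (fun i => (d i : 𝕜))) * diagonal (fun i => (d i : 𝕜))‖ ≤ ε * s) :
    ‖A * G * diagonal (fun i => (d i : 𝕜))‖ ≤ 1 / (1 - ε) := by
  set D : Matrix n n 𝕜 := diagonal fun i => (d i : 𝕜)
  have hc : 0 < 1 - ε := sub_pos.2 hε₁
  have hD : D.IsHermitian := by simp [D, IsHermitian, diagonal_conjTranspose]
  rw [l2_opNorm_def]
  refine ContinuousLinearMap.opNorm_le_bound _ (by positivity) fun x => ?_
  have happly : (toEuclideanLin.trans LinearMap.toContinuousLinearMap (A * G * D)) x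
      = toEuclideanLin A (toEuclideanLin (G * D) x) := by
    simp [Matrix.mul_assoc]
  have hlow := one_sub_mul_norm_toEuclideanLin_diagonal_le hU hd hds hε₀ hE
    (toEuclideanLin (G * D) x)
  have hup := norm_toEuclideanLin_sq_le_of_gram_mul_eq_one hG hD x
  rw [happly, one_div_mul_eq_div, le_div_iff₀ hc]
  set a := ‖toEuclideanLin A (toEuclideanLin (G * D) x)‖
  have ha : 0 ≤ a := norm_nonneg _
  have hquad : (1 - ε) * a ^ 2 ≤ a * ‖x‖ := by
    nlinarith [mul_le_mul_of_nonneg_right hlow (norm_nonneg x)]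
  by_contra! hlt
  nlinarith [norm_nonneg x]

end Matrix

theorem ZMod.finEquiv_apply {n : ℕ} [NeZero n] (t : Fin n) : ZMod.finEquiv n t = t.val := by
  cases n with
  | zero => exact absurd rfl (NeZero.ne 0)
  | succ m => exact (Fin.cast_val_eq_self t).symm

namespace RTPCA

section Fourier

variable {n : ℕ} [NeZero n]

/-- The kernel `exp (-2πi k t / n)` of `dft`, as a value of the standard additive character of
`ZMod n`. -/
noncomputable def fourierKernel (k t : Fin n) : ℂ :=
  ZMod.stdAddChar (-(ZMod.finEquiv n k * ZMod.finEquiv n t))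

lemma fourierKernel_eq_exp (k t : Fin n) :
    fourierKernel k t = Complex.exp (-(2 * Real.pi * Complex.I * k.val * t.val) / n) := by
  rw [fourierKernel, ZMod.finEquiv_apply, ZMod.finEquiv_apply, ← Nat.cast_mul, ← Int.cast_natCast,
    ← Int.cast_neg, ZMod.stdAddChar_coe]
  push_cast
  ring_nf

lemma conj_fourierKernel_eq_exp (k t : Fin n) :
    conj (fourierKernel k t) = Complex.exp (2 * Real.pi * Complex.I * k.val * t.val / n) := by
  rw [fourierKernel_eq_exp, ← Complex.exp_conj]
  simp only [map_div₀, map_neg, map_mul, map_ofNat, Complex.conj_ofReal, Complex.conj_I,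
    map_natCast]
  ring_nf

lemma fourierKernel_add (k s t : Fin n) :
    fourierKernel k (s + t) = fourierKernel k s * fourierKernel k t := by
  simp only [fourierKernel, map_add, mul_add, neg_add, AddChar.map_add_eq_mul]

lemma fourierKernel_zero (k : Fin n) : fourierKernel k 0 = 1 := by
  simp [fourierKernel]

lemma fourierKernel_comm (k t : Fin n) : fourierKernel k t = fourierKernel t k := by
  rw [fourierKernel, fourierKernel, mul_comm]

lemma conj_fourierKernel (k t : Fin n) : conj (fourierKernel k t) = fourierKernel k (-t) := by
  rw [fourierKernel, AddChar.starComp_apply (by rw [ZMod.ringChar_zmod_n]; exact NeZero.pos n),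
    AddChar.inv_apply', ← AddChar.map_neg_eq_inv, fourierKernel, map_neg (ZMod.finEquiv n),
    mul_neg]

lemma norm_fourierKernel (k t : Fin n) : ‖fourierKernel k t‖ = 1 :=
  Circle.norm_coe _

lemma sum_fourierKernel_mul_conj (k k' : Fin n) :
    ∑ t, fourierKernel k t * conj (fourierKernel k' t) = if k = k' then (n : ℂ) else 0 := by
  set b := ZMod.finEquiv n k' - ZMod.finEquiv n k
  have hchar : ∀ t, fourierKernel k t * conj (fourierKernel k' t)
      = ZMod.stdAddChar (ZMod.finEquiv n t * b) := by
    intro t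
    rw [conj_fourierKernel, fourierKernel, fourierKernel, ← AddChar.map_add_eq_mul, map_neg]
    congr 1
    ring
  have hreindex : ∑ t, ZMod.stdAddChar (ZMod.finEquiv n t * b)
      = ∑ x, ZMod.stdAddChar (x * b) :=
    (ZMod.finEquiv n).toEquiv.sum_comp (fun x => ZMod.stdAddChar (x * b))
  rw [Finset.sum_congr rfl fun t _ => hchar t, hreindex,
    AddChar.sum_mulShift _ (ZMod.isPrimitive_stdAddChar n), ZMod.card]
  simp only [b, sub_eq_zero, (ZMod.finEquiv n).injective.eq_iff, eq_comm (a := k'),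
    Nat.cast_ite, Nat.cast_zero]

variable {I₁ I₂ J : ℕ}

lemma dft_eq_sum (A : Tensor I₁ I₂ n) (i : Fin I₁) (j : Fin I₂) (k : Fin n) :
    dft A i j k = ∑ t, (A i j t : ℂ) * fourierKernel k t := by
  simp only [dft, fourierKernel_eq_exp, neg_div]

lemma dft_neg (A : Tensor I₁ I₂ n) (i : Fin I₁) (j : Fin I₂) (k : Fin n) :
    dft A i j (-k) = conj (dft A i j k) := by
  simp only [dft_eq_sum, map_sum, map_mul, Complex.conj_ofReal, fourierKernel_comm k,
    conj_fourierKernel, fourierKernel_comm _ (-k)]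

lemma dft_invDft (F : Fin I₁ → Fin I₂ → Fin n → ℂ) (hF : ∀ i j k, F i j (-k) = conj (F i j k))
    (i : Fin I₁) (j : Fin I₂) (k : Fin n) : dft (invDft F) i j k = F i j k := by
  set S : Fin n → ℂ := fun t => ∑ k', F i j k' * conj (fourierKernel k' t)
  have hS_real : ∀ t, conj (S t) = S t := by
    intro t
    simp only [S, map_sum, map_mul, Complex.conj_conj, ← hF]
    refine Fintype.sum_equiv (Equiv.neg (Fin n)) _ _ fun k' => ?_
    simp [conj_fourierKernel, fourierKernel_comm k', fourierKernel_comm (-k')]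
  have hinvDft : ∀ t, (invDft F i j t : ℂ) = S t / n := by
    intro t
    have hre : invDft F i j t = (S t / n).re := by
      simp only [invDft, S, conj_fourierKernel_eq_exp]
    rw [hre, Complex.conj_eq_iff_re.1 (by rw [map_div₀, hS_real, map_natCast])]
  have hn : (n : ℂ) ≠ 0 := Nat.cast_ne_zero.2 (NeZero.ne n)
  calc dft (invDft F) i j k = ∑ t, S t / n * fourierKernel k t := by
        simp only [dft_eq_sum, hinvDft]
    _ = ∑ k', F i j k' / n * ∑ t, fourierKernel k t * conj (fourierKernel k' t) := by
        simp only [S, Finset.sum_div, Finset.sum_mul, Finset.mul_sum]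
        rw [Finset.sum_comm]
        exact Finset.sum_congr rfl fun _ _ => Finset.sum_congr rfl fun _ _ => by ring
    _ = F i j k := by
        simp only [sum_fourierKernel_mul_conj, mul_ite, mul_zero, Finset.sum_ite_eq,
          Finset.mem_univ, if_true, div_mul_cancel₀ _ hn]

lemma fSlice_sub (A B : Tensor I₁ I₂ n) (k : Fin n) :
    fSlice (A - B) k = fSlice A k - fSlice B k := by
  ext i j
  simp only [fSlice, of_apply, Matrix.sub_apply, dft_eq_sum, Pi.sub_apply, Complex.ofReal_sub,
    sub_mul, Finset.sum_sub_distrib]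

lemma fSlice_tprod (A : Tensor I₁ I₂ n) (B : Tensor I₂ J n) (k : Fin n) :
    fSlice (tprod A B) k = fSlice A k * fSlice B k := by
  ext i j
  simp only [fSlice, of_apply, mul_apply, dft_eq_sum, tprod, Complex.ofReal_sum,
    Complex.ofReal_mul, Finset.sum_mul, Finset.mul_sum]
  rw [Finset.sum_comm]
  refine Finset.sum_congr rfl fun l _ => ?_
  rw [Finset.sum_comm]
  conv_rhs => rw [Finset.sum_comm]
  refine Finset.sum_congr rfl fun s _ => ?_
  refine (Fintype.sum_equiv (Equiv.addLeft s) _ _ fun u => ?_).symm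
  simp only [Equiv.coe_addLeft, add_sub_cancel_left, fourierKernel_add]
  ring

lemma fSlice_tT (A : Tensor I₁ I₂ n) (k : Fin n) : fSlice (tT A) k = (fSlice A k)ᴴ := by
  ext i j
  simp only [fSlice, of_apply, conjTranspose_apply, dft_eq_sum, tT, RCLike.star_def, map_sum,
    map_mul, Complex.conj_ofReal, conj_fourierKernel]
  exact Fintype.sum_equiv (Equiv.neg (Fin n)) _ _ fun t => by simp

lemma fSlice_idT (R : ℕ) (k : Fin n) : fSlice (idT R n) k = 1 := by
  ext i j
  rw [fSlice, of_apply, dft_eq_sum, Finset.sum_eq_single 0]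
  · by_cases h : i = j <;> simp [idT, h, one_apply, fourierKernel_zero]
  · intro t _ ht
    simp [idT, Fin.val_ne_zero_iff.2 ht]
  · simp

lemma fSlice_sqrtT {R : ℕ} (S : Tensor R R n) (k : Fin n) :
    fSlice (sqrtT S) k = of fun i j => (√(fSlice S k i j).re : ℂ) := by
  ext i j
  exact dft_invDft _ (fun i j k => by rw [dft_neg, Complex.conj_re, Complex.conj_ofReal]) i j k

lemma fSlice_sqrtT_eq_diagonal {R : ℕ} {S : Tensor R R n} (hS : FDiagPos S) (k : Fin n) :
    fSlice (sqrtT S) k = diagonal fun i => (√(fSlice S k i i).re : ℂ) := by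
  rw [fSlice_sqrtT]
  ext i j
  by_cases h : i = j
  · simp [h]
  · simp [diagonal_apply_ne _ h, hS.1 k i j h]

lemma sum_norm_fSlice_sq_le (A : Tensor I₁ I₂ n) (k : Fin n) :
    ∑ i, ∑ j, ‖fSlice A k i j‖ ^ 2 ≤ n * fro2 A := by
  rw [fro2, Finset.mul_sum]
  refine Finset.sum_le_sum fun i _ => ?_
  rw [Finset.mul_sum]
  refine Finset.sum_le_sum fun j _ => ?_
  calc ‖fSlice A k i j‖ ^ 2 ≤ (∑ t, |A i j t|) ^ 2 := by
        rw [fSlice, of_apply, dft_eq_sum]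
        gcongr
        refine (norm_sum_le _ _).trans_eq (Finset.sum_congr rfl fun t _ => ?_)
        rw [norm_mul, norm_fourierKernel, mul_one, Complex.norm_real, Real.norm_eq_abs]
    _ ≤ n * ∑ t, |A i j t| ^ 2 := by
        simpa using sq_sum_le_card_mul_sum_sq (s := Finset.univ) (f := fun t => |A i j t|)
    _ = n * ∑ t, A i j t ^ 2 := by simp only [sq_abs]

lemma l2_opNorm_fSlice_le (A : Tensor I₁ I₂ n) (k : Fin n) :
    ‖fSlice A k‖ ≤ √n * froNorm A := by
  rw [froNorm, ← Real.sqrt_mul (Nat.cast_nonneg n)]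
  exact (l2_opNorm_le_sqrt_sum_norm_sq _).trans (Real.sqrt_le_sqrt (sum_norm_fSlice_sq_le A k))

end Fourier

variable {I₁ I₂ I₃ R : ℕ}

lemma sigmaMin_nonneg {S : Tensor R R I₃} (hS : FDiagPos S) : 0 ≤ sigmaMin S :=
  Real.iInf_nonneg fun k => Real.iInf_nonneg fun i => (hS.2 k i).1.le

lemma sigmaMin_le (S : Tensor R R I₃) (k : Fin I₃) (i : Fin R) :
    sigmaMin S ≤ (fSlice S k i i).re :=
  (ciInf_le (Set.finite_range _).bddBelow k).trans (ciInf_le (Set.finite_range _).bddBelow i)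

lemma froNorm_le_alignErr_left (L Ls : Tensor I₁ R I₃) (Rt Rs : Tensor I₂ R I₃)
    (Sh Q Qi : Tensor R R I₃) :
    froNorm (tprod (tprod L Q - Ls) Sh) ≤ alignErr L Ls Rt Rs Sh Q Qi :=
  (le_abs_self _).trans (Real.abs_le_sqrt (le_add_of_nonneg_right (sq_nonneg _)))

lemma froNorm_le_alignErr_right (L Ls : Tensor I₁ R I₃) (Rt Rs : Tensor I₂ R I₃)
    (Sh Q Qi : Tensor R R I₃) :
    froNorm (tprod (tprod Rt (tT Qi) - Rs) Sh) ≤ alignErr L Ls Rt Rs Sh Q Qi :=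
  (le_abs_self _).trans (Real.abs_le_sqrt (le_add_of_nonneg_left (sq_nonneg _)))

theorem specNorm_tprod_gramInv_sqrtT_le {S : Tensor R R I₃} (hS : FDiagPos S)
    {U L : Tensor I₁ R I₃} {G : Tensor R R I₃} (hU : tprod (tT U) U = idT R I₃)
    (hG : tprod (tprod (tT L) L) G = idT R I₃) {ε : ℝ} (hε₀ : 0 ≤ ε) (hε₁ : ε < 1)
    (hL : froNorm (tprod (L - tprod U (sqrtT S)) (sqrtT S)) ≤ ε / √I₃ * sigmaMin S) :
    specNorm (tprod (tprod L G) (sqrtT S)) ≤ 1 / (1 - ε) := by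
  refine Real.iSup_le (fun k => ?_) (one_div_nonneg.2 (sub_pos.2 hε₁).le)
  have : NeZero I₃ := NeZero.of_pos k.pos
  have hE : ‖fSlice (tprod (L - tprod U (sqrtT S)) (sqrtT S)) k‖ ≤ ε * sigmaMin S :=
    calc ‖fSlice (tprod (L - tprod U (sqrtT S)) (sqrtT S)) k‖
        ≤ √I₃ * froNorm (tprod (L - tprod U (sqrtT S)) (sqrtT S)) := l2_opNorm_fSlice_le _ k
      _ ≤ √I₃ * (ε / √I₃ * sigmaMin S) := by gcongr
      _ = ε * sigmaMin S := by
          field_simp [(Real.sqrt_pos.2 (Nat.cast_pos.2 k.pos)).ne']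
  have hD := fSlice_sqrtT_eq_diagonal hS k
  -- `matSpecNorm` is definitionally the L2 operator norm of `Matrix.Norms.L2Operator`.
  show ‖fSlice (tprod (tprod L G) (sqrtT S)) k‖ ≤ _
  rw [fSlice_tprod, fSlice_tprod, hD]
  refine l2_opNorm_mul_mul_diagonal_le (U := fSlice U k) (s := sigmaMin S) ?_
    (fun i => Real.sqrt_pos.2 (hS.2 k i).1) (fun i => ?_) hε₀ hε₁ ?_ ?_
  · simpa [fSlice_tprod, fSlice_tT, fSlice_idT] using congrArg (fSlice · k) hU
  · rw [Real.sq_sqrt (hS.2 k i).1.le]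
    exact sigmaMin_le S k i
  · simpa [fSlice_tprod, fSlice_tT, fSlice_idT] using congrArg (fSlice · k) hG
  · rw [fSlice_tprod, fSlice_sub, fSlice_tprod, hD] at hE
    exact hE

end RTPCA

/-- spectral-norm bound for the scaled aligned factors. -/
theorem scaled_factor_specNorm_bound
    {I₁ I₂ I₃ R : ℕ}
    (Xs : Tensor I₁ I₂ I₃) (Us : Tensor I₁ R I₃) (Sig : Tensor R R I₃) (Vs : Tensor I₂ R I₃)
    (hsvd : IsSkinnyTSVD Xs Us Sig Vs)
    (ε τ : ℝ) (hε₀ : 0 < ε) (hε₁ : ε < 1) (hτ₀ : 0 < τ) (hτ₁ : τ ≤ 1) (k : ℕ)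
    (Lk : Tensor I₁ R I₃) (Rk : Tensor I₂ R I₃)
    (Q Qi : Tensor R R I₃)
    (hopt : IsOptAlign Lk (tprod Us (sqrtT Sig)) Rk (tprod Vs (sqrtT Sig)) (sqrtT Sig) Q Qi)
    (hdist : distT Lk (tprod Us (sqrtT Sig)) Rk (tprod Vs (sqrtT Sig)) (sqrtT Sig)
      ≤ ε / Real.sqrt I₃ * τ ^ k * sigmaMin Sig)
    (Gl Gr : Tensor R R I₃)
    (hGl : TInv (tprod (tT (tprod Lk Q)) (tprod Lk Q)) Gl)
    (hGr : TInv (tprod (tT (tprod Rk (tT Qi))) (tprod Rk (tT Qi))) Gr) :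
    max (specNorm (tprod (tprod (tprod Lk Q) Gl) (sqrtT Sig)))
        (specNorm (tprod (tprod (tprod Rk (tT Qi)) Gr) (sqrtT Sig)))
      ≤ 1 / (1 - ε) := by
  have herr : alignErr Lk (tprod Us (sqrtT Sig)) Rk (tprod Vs (sqrtT Sig)) (sqrtT Sig) Q Qi
      ≤ ε / Real.sqrt I₃ * sigmaMin Sig := by
    rw [hopt.2]
    refine hdist.trans (mul_le_mul_of_nonneg_right ?_ (sigmaMin_nonneg hsvd.diag))
    exact mul_le_of_le_one_right (by positivity) (pow_le_one₀ hτ₀.le hτ₁)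
  exact max_le
    (specNorm_tprod_gramInv_sqrtT_le hsvd.diag hsvd.orthU hGl.1 hε₀.le hε₁
      ((froNorm_le_alignErr_left ..).trans herr))
    (specNorm_tprod_gramInv_sqrtT_le hsvd.diag hsvd.orthV hGr.1 hε₀.le hε₁
      ((froNorm_le_alignErr_right ..).trans herr))
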